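/- Let G be a finite simple graph that is MEG-extremal, i.e., meg(G) equals the number of vertices of G, and let H be any finite simple graph. Then the Cartesian product G □ H is MEG-extremal, i.e., meg(G □ H) equals the number of vertices of G □ H. -/

import Mathlib

/-!
If `G` is MEG-extremal, then for every vertex `a` some edge `xy` of `G` is monitored only by pairs
containing `a`. In `G □ H`, a pair monitoring the copy `(x, b)(y, b)` of that edge must lie in the
layer `G × {b}`: shortest paths between `(u, c)` and `(v, d)` may do their `G`-steps in layer `c`
or in layer `d`, so both equal `b`, and the first coordinates then monitor `xy` in `G`. Hence
`(a, b)` belongs to every MEG-set of `G □ H`.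
-/

open SimpleGraph

/-- A pair of vertices `u`, `v` monitors an edge `e` if `u` and `v` are reachable from
each other and `e` belongs to every shortest path (walk of length `G.dist u v`)
between `u` and `v`. -/
def Monitors {V : Type*} (G : SimpleGraph V) (u v : V) (e : Sym2 V) : Prop :=
  G.Reachable u v ∧ ∀ p : G.Walk u v, p.length = G.dist u v → e ∈ p.edges

/-- A monitoring edge-geodetic set of `G`: every edge of `G` is monitored by some
pair of vertices of `M`. -/
def IsMEGSet {V : Type*} (G : SimpleGraph V) (M : Set V) : Prop :=
  ∀ e ∈ G.edgeSet, ∃ u ∈ M, ∃ v ∈ M, Monitors G u v e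

/-- The monitoring edge-geodetic number of `G`: the minimum size of an MEG-set. -/
noncomputable def meg {V : Type*} [Fintype V] (G : SimpleGraph V) : ℕ :=
  sInf {n : ℕ | ∃ M : Finset V, IsMEGSet G ↑M ∧ M.card = n}

namespace SimpleGraph

variable {α β : Type*} {G : SimpleGraph α} {H : SimpleGraph β}

lemma dist_boxProd {x y : α × β} (h : (G □ H).Reachable x y) :
    (G □ H).dist x y = G.dist x.1 y.1 + H.dist x.2 y.2 := by
  obtain ⟨hG, hH⟩ := reachable_boxProd.1 h
  rw [dist, edist_boxProd, ENat.toNat_add (edist_ne_top_iff_reachable.2 hG)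
    (edist_ne_top_iff_reachable.2 hH), dist, dist]

namespace Walk

@[simp]
lemma length_boxProdLeft {a₁ a₂ : α} (b : β) (q : G.Walk a₁ a₂) :
    (q.boxProdLeft H b).length = q.length :=
  length_map _ _

@[simp]
lemma length_boxProdRight {b₁ b₂ : β} (a : α) (r : H.Walk b₁ b₂) :
    (r.boxProdRight G a).length = r.length :=
  length_map _ _

lemma edges_boxProdLeft {a₁ a₂ : α} (b : β) (q : G.Walk a₁ a₂) :
    (q.boxProdLeft H b).edges = q.edges.map (Sym2.map (·, b)) :=
  edges_map _ _

lemma edges_boxProdRight {b₁ b₂ : β} (a : α) (r : H.Walk b₁ b₂) :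
    (r.boxProdRight G a).edges = r.edges.map (Sym2.map (a, ·)) :=
  edges_map _ _

lemma mem_edges_boxProdLeft {a₁ a₂ x y : α} {b c : β} (q : G.Walk a₁ a₂) :
    s((x, c), (y, c)) ∈ (q.boxProdLeft H b).edges ↔ c = b ∧ s(x, y) ∈ q.edges := by
  rw [edges_boxProdLeft, List.mem_map]
  constructor
  · rintro ⟨e, he, hmap⟩
    induction e using Sym2.ind with
    | _ x' y' =>
      simp only [Sym2.map_mk, Sym2.eq_iff, Prod.mk.injEq] at hmap
      refine ⟨by tauto, ?_⟩
      rcases hmap with ⟨⟨rfl, -⟩, rfl, -⟩ | ⟨⟨rfl, -⟩, rfl, -⟩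
      · exact he
      · exact Sym2.eq_swap ▸ he
  · rintro ⟨rfl, he⟩
    exact ⟨s(x, y), he, rfl⟩

lemma notMem_edges_boxProdRight {b₁ b₂ c d : β} {x y : α} (a : α) (r : H.Walk b₁ b₂)
    (hxy : x ≠ y) : s((x, c), (y, d)) ∉ (r.boxProdRight G a).edges := by
  rw [edges_boxProdRight, List.mem_map]
  rintro ⟨e, -, hmap⟩
  induction e using Sym2.ind with
  | _ b' b'' =>
    simp only [Sym2.map_mk, Sym2.eq_iff, Prod.mk.injEq] at hmap
    exact hxy (by grind)

end Walk

end SimpleGraph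

section BoxProd

variable {α β : Type*} {G : SimpleGraph α} {H : SimpleGraph β}

lemma Monitors.ofBoxProdLeft {u v x y : α} {b c d : β} (hxy : G.Adj x y)
    (h : Monitors (G □ H) (u, c) (v, d) s((x, b), (y, b))) :
    c = b ∧ d = b ∧ Monitors G u v s(x, y) := by
  obtain ⟨hreach, hmon⟩ := h
  obtain ⟨hG, hH⟩ := reachable_boxProd.1 hreach
  obtain ⟨q, hq⟩ := hG.exists_walk_length_eq_dist
  obtain ⟨r, hr⟩ := hH.exists_walk_length_eq_dist
  have hdist := dist_boxProd hreach
  have hc : c = b := by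
    have he := hmon ((q.boxProdLeft H c).append (r.boxProdRight G v)) (by simp [hq, hr, hdist])
    rw [Walk.edges_append, List.mem_append] at he
    exact ((Walk.mem_edges_boxProdLeft q).1
      (he.resolve_right (Walk.notMem_edges_boxProdRight _ _ hxy.ne))).1.symm
  have hd : d = b := by
    have he := hmon ((r.boxProdRight G u).append (q.boxProdLeft H d))
      (by simp [hq, hr, hdist, add_comm])
    rw [Walk.edges_append, List.mem_append] at he
    exact ((Walk.mem_edges_boxProdLeft q).1
      (he.resolve_left (Walk.notMem_edges_boxProdRight _ _ hxy.ne))).1.symm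
  subst c d
  refine ⟨rfl, rfl, hG, fun p hp => ?_⟩
  have he := hmon (p.boxProdLeft H b) (by simp [hp, hdist])
  exact ((Walk.mem_edges_boxProdLeft p).1 he).2

end BoxProd

section MEG

variable {V : Type*} {G : SimpleGraph V}

lemma SimpleGraph.Adj.monitors {x y : V} (h : G.Adj x y) : Monitors G x y s(x, y) := by
  refine ⟨h.reachable, fun p hp => ?_⟩
  rw [dist_eq_one_iff_adj.2 h] at hp
  cases p with
  | nil => simp at hp
  | cons _ q =>
    obtain rfl := Walk.eq_of_length_eq_zero (by simpa using hp : q.length = 0)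
    simp

lemma isMEGSet_univ (G : SimpleGraph V) : IsMEGSet G Set.univ := by
  intro e he
  induction e using Sym2.ind with
  | _ x y => exact ⟨x, trivial, y, trivial, (mem_edgeSet G).1 he |>.monitors⟩

variable [Fintype V]

lemma meg_le_card {M : Finset V} (hM : IsMEGSet G M) : meg G ≤ M.card :=
  Nat.sInf_le ⟨M, hM, rfl⟩

lemma meg_eq_card_iff : meg G = Fintype.card V ↔ ∀ M : Finset V, IsMEGSet G M → M = .univ := by
  have huniv : IsMEGSet G ↑(Finset.univ : Finset V) := by simpa using isMEGSet_univ G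
  constructor
  · intro h M hM
    by_contra hne
    have := (Finset.card_lt_iff_ne_univ M).2 hne
    have := meg_le_card hM
    omega
  · intro h
    obtain ⟨M, hM, hcard⟩ : meg G ∈ {n | ∃ M : Finset V, IsMEGSet G M ∧ M.card = n} :=
      Nat.sInf_mem ⟨_, _, huniv, rfl⟩
    rw [← hcard, h M hM, Finset.card_univ]

end MEG

/-- if `G` is MEG-extremal then so is the Cartesian product `G □ H`. -/
theorem meg_boxProd_extremal {α β : Type*} [Fintype α] [Fintype β]
    (G : SimpleGraph α) (H : SimpleGraph β) (hG : meg G = Fintype.card α) :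
    meg (G □ H) = Fintype.card (α × β) := by
  classical
  rw [meg_eq_card_iff] at hG ⊢
  intro M hM
  refine Finset.eq_univ_of_forall fun ⟨a, b⟩ => ?_
  obtain ⟨e, he, hmon⟩ : ∃ e ∈ G.edgeSet, ∀ u ≠ a, ∀ v ≠ a, ¬ Monitors G u v e := by
    simpa [IsMEGSet] using
      mt (hG (Finset.univ.erase a)) fun h => Finset.notMem_erase a _ (h ▸ Finset.mem_univ a)
  induction e using Sym2.ind with
  | _ x y =>
    obtain ⟨⟨u, c⟩, hu, ⟨v, d⟩, hv, huv⟩ := hM s((x, b), (y, b)) (boxProd_adj_left.2 he)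
    obtain ⟨rfl, rfl, huvG⟩ := huv.ofBoxProdLeft he
    by_contra hab
    exact hmon u (by rintro rfl; exact hab hu) v (by rintro rfl; exact hab hv) huvG
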